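/- In the quotient S/↔ of an inverse ∧-semigroup S with zero by the relation ↔, binary meets exist and λ(s ∧ t) = λ(s) ∧ λ(t). -/

import Mathlib

/-!
Monotonicity of `λ` makes `λ (s ⊓ t)` a lower bound. For the converse take a lower bound
`λ u`. Since `λ u ≤ λ s`, the restriction `u₁ := s (u⁻¹ u) ≤ s` has `λ u₁ = λ u`, and likewise
there is `v ≤ t` with `λ v = λ u₁`. Then `u₁ → v`, hence `u₁ → u₁ ⊓ t`, while `u₁ ⊓ t → u₁`
holds trivially; so `λ u = λ (u₁ ⊓ t) ≤ λ (s ⊓ t)`.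
-/

/-- An inverse semigroup with zero whose natural partial order has binary meets
(an inverse ∧-semigroup with zero). The order `≤` is required to coincide with
the natural partial order: `a ≤ b ↔ a = b * (a⁻¹ * a)`. -/
class InverseMeetSemigroup (S : Type*) extends Semigroup S, Zero S, Inv S, SemilatticeInf S where
  mul_inv_mul : ∀ a : S, a * a⁻¹ * a = a
  inv_mul_inv : ∀ a : S, a⁻¹ * a * a⁻¹ = a⁻¹
  idem_comm : ∀ e f : S, e * e = e → f * f = f → e * f = f * e
  zero_mul : ∀ a : S, (0 : S) * a = 0
  mul_zero : ∀ a : S, a * (0 : S) = 0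
  le_iff : ∀ a b : S, a ≤ b ↔ a = b * (a⁻¹ * a)

variable {S : Type*} [InverseMeetSemigroup S]

/-- The Lenz arrow relation: `a → b` iff every nonzero `x ≤ a` satisfies `x ⊓ b ≠ 0`. -/
def LenzArrow (a b : S) : Prop := ∀ x : S, x ≠ 0 → x ≤ a → x ⊓ b ≠ 0

/-- An inverse semigroup with zero, equipped with its natural partial order:
`a ≤ b ↔ a = b * (a⁻¹ * a)`. -/
class InverseZeroSemigroup (S : Type*) extends Semigroup S, Zero S, Inv S, PartialOrder S where
  mul_inv_mul : ∀ a : S, a * a⁻¹ * a = a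
  inv_mul_inv : ∀ a : S, a⁻¹ * a * a⁻¹ = a⁻¹
  idem_comm : ∀ e f : S, e * e = e → f * f = f → e * f = f * e
  zero_mul : ∀ a : S, (0 : S) * a = 0
  mul_zero : ∀ a : S, a * (0 : S) = 0
  le_iff : ∀ a b : S, a ≤ b ↔ a = b * (a⁻¹ * a)


namespace InverseMeetSemigroup

lemma isIdempotentElem_mul_of_mul_mul_eq {a b : S} (h : a * b * a = a) :
    IsIdempotentElem (a * b) := by
  change a * b * (a * b) = a * b
  rw [← mul_assoc, h]

lemma isIdempotentElem_mul_of_mul_mul_eq' {a b : S} (h : a * b * a = a) :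
    IsIdempotentElem (b * a) := by
  change b * a * (b * a) = b * a
  rw [mul_assoc, ← mul_assoc a, h]

lemma eq_inv_of_mul_mul_eq {a b : S} (h₁ : a * b * a = a) (h₂ : b * a * b = b) : b = a⁻¹ := by
  set c := a⁻¹
  have hc₁ : a * c * a = a := mul_inv_mul a
  have hc₂ : c * a * c = c := inv_mul_inv a
  calc b = b * (a * c * a) * b := by rw [hc₁, h₂]
  _ = ((b * a) * (c * a)) * b := by simp only [mul_assoc]
  _ = ((c * a) * (b * a)) * b := by
    rw [idem_comm _ _ (isIdempotentElem_mul_of_mul_mul_eq' h₁)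
      (isIdempotentElem_mul_of_mul_mul_eq' hc₁)]
  _ = c * ((a * b) * (a * b)) := by simp only [mul_assoc]
  _ = (c * a * c) * (a * b) := by rw [isIdempotentElem_mul_of_mul_mul_eq h₁, hc₂]
  _ = c * ((a * c) * (a * b)) := by simp only [mul_assoc]
  _ = c * ((a * b) * (a * c)) := by
    rw [idem_comm _ _ (isIdempotentElem_mul_of_mul_mul_eq hc₁)
      (isIdempotentElem_mul_of_mul_mul_eq h₁)]
  _ = c * (a * b * a) * c := by simp only [mul_assoc]
  _ = c := by rw [h₁, hc₂]

lemma isIdempotentElem_inv_mul_self (a : S) : IsIdempotentElem (a⁻¹ * a) :=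
  isIdempotentElem_mul_of_mul_mul_eq' (mul_inv_mul a)

lemma comm_inv_mul_self_of_isIdempotentElem {a e : S} (he : IsIdempotentElem e) :
    e * (a⁻¹ * a) = a⁻¹ * a * e :=
  idem_comm _ _ he (isIdempotentElem_inv_mul_self a)

lemma mul_inv_rev_of_isIdempotentElem {a e : S} (he : IsIdempotentElem e) :
    (a * e)⁻¹ = e * a⁻¹ := by
  have hcomm := comm_inv_mul_self_of_isIdempotentElem (a := a) he
  refine (eq_inv_of_mul_mul_eq ?_ ?_).symm
  · calc a * e * (e * a⁻¹) * (a * e) = a * ((e * e) * (a⁻¹ * a)) * e := by simp only [mul_assoc]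
    _ = a * ((a⁻¹ * a) * e) * e := by rw [he.eq, hcomm]
    _ = (a * a⁻¹ * a) * (e * e) := by simp only [mul_assoc]
    _ = a * e := by rw [he.eq, mul_inv_mul]
  · calc e * a⁻¹ * (a * e) * (e * a⁻¹) = e * ((a⁻¹ * a) * (e * e)) * a⁻¹ := by simp only [mul_assoc]
    _ = e * (e * (a⁻¹ * a)) * a⁻¹ := by rw [he.eq, hcomm]
    _ = (e * e) * (a⁻¹ * a * a⁻¹) := by simp only [mul_assoc]
    _ = e * a⁻¹ := by rw [he.eq, inv_mul_inv]

lemma mul_le_self_of_isIdempotentElem (a : S) {e : S} (he : IsIdempotentElem e) : a * e ≤ a := by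
  rw [le_iff, mul_inv_rev_of_isIdempotentElem he]
  calc a * e = (a * a⁻¹ * a) * (e * e) := by rw [he.eq, mul_inv_mul]
  _ = a * ((a⁻¹ * a) * e * e) := by simp only [mul_assoc]
  _ = a * (e * a⁻¹ * (a * e)) := by
    rw [← comm_inv_mul_self_of_isIdempotentElem he]; simp only [mul_assoc]

lemma eq_zero_of_le_zero {a : S} (h : a ≤ 0) : a = 0 := by
  rw [le_iff] at h
  rw [h, zero_mul]

end InverseMeetSemigroup

open InverseMeetSemigroup

lemma lenzArrow_of_le {a b : S} (h : a ≤ b) : LenzArrow a b := fun x hx hxa => by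
  rwa [inf_eq_left.mpr (hxa.trans h)]

lemma LenzArrow.mono_right {a b c : S} (h : LenzArrow a b) (hbc : b ≤ c) : LenzArrow a c :=
  fun x hx hxa hxc => h x hx hxa (eq_zero_of_le_zero (hxc ▸ inf_le_inf_left x hbc))

lemma LenzArrow.inf_self_left {a b : S} (h : LenzArrow a b) : LenzArrow a (a ⊓ b) :=
  fun x hx hxa => by rw [← inf_assoc, inf_eq_left.mpr hxa]; exact h x hx hxa

section QuotientMap

variable {T : Type*} [InverseZeroSemigroup T] {lam : S → T}
  (hmul : ∀ x y : S, lam (x * y) = lam x * lam y) (hinv : ∀ x : S, lam x⁻¹ = (lam x)⁻¹)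
include hmul hinv

lemma monotone_of_map_mul_of_map_inv : Monotone lam := fun a b h => by
  rw [le_iff] at h
  rw [InverseZeroSemigroup.le_iff, ← hinv, ← hmul, ← hmul, ← h]

lemma exists_le_map_eq_of_map_le {a b : S} (h : lam a ≤ lam b) : ∃ a' ≤ b, lam a' = lam a := by
  refine ⟨b * (a⁻¹ * a), mul_le_self_of_isIdempotentElem b (isIdempotentElem_inv_mul_self a), ?_⟩
  rw [InverseZeroSemigroup.le_iff] at h
  rw [hmul, hmul, hinv, ← h]

end QuotientMap

/-- The quotient `S/↔` is presented as a surjective multiplicative, inverse-preserving map `λ`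
with kernel `↔` onto an inverse semigroup with zero carrying its natural partial order. -/
theorem quotient_meet_general {T : Type*} [InverseZeroSemigroup T]
    (lam : S → T)
    (hmul : ∀ x y : S, lam (x * y) = lam x * lam y)
    (hinv : ∀ x : S, lam x⁻¹ = (lam x)⁻¹)
    (hsurj : Function.Surjective lam)
    (hker : ∀ x y : S, lam x = lam y ↔ (LenzArrow x y ∧ LenzArrow y x))
    (s t : S) :
    IsGLB ({lam s, lam t} : Set T) (lam (s ⊓ t)) := by
  have hmono := monotone_of_map_mul_of_map_inv hmul hinv
  refine ⟨?_, fun c hc => ?_⟩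
  · rintro _ (rfl | rfl)
    exacts [hmono inf_le_left, hmono inf_le_right]
  obtain ⟨u, rfl⟩ := hsurj c
  obtain ⟨u₁, hu₁s, hu₁⟩ := exists_le_map_eq_of_map_le hmul hinv (hc (Set.mem_insert _ _))
  obtain ⟨v, hvt, hv⟩ := exists_le_map_eq_of_map_le hmul hinv
    (hu₁ ▸ hc (Set.mem_insert_of_mem _ rfl) : lam u₁ ≤ lam t)
  have hu₁v : LenzArrow u₁ v := ((hker u₁ v).mp hv.symm).1
  have hu₁_eq : lam u₁ = lam (u₁ ⊓ t) :=
    (hker _ _).mpr ⟨(hu₁v.mono_right hvt).inf_self_left, lenzArrow_of_le inf_le_left⟩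
  calc lam u = lam (u₁ ⊓ t) := hu₁ ▸ hu₁_eq
  _ ≤ lam (s ⊓ t) := hmono (inf_le_inf_right t hu₁s)

/-- In the quotient `S/↔` (here presented as a surjective multiplicative,
zero- and inverse-preserving map `λ` with kernel `↔`, onto an inverse
semigroup with zero carrying its natural partial order), binary meets exist
and `λ (s ⊓ t)` is the meet of `λ s` and `λ t`. -/
theorem quotient_meet {T : Type*} [InverseZeroSemigroup T]
    (lam : S → T)
    (hmul : ∀ x y : S, lam (x * y) = lam x * lam y)
    (hzero : lam (0 : S) = 0)
    (hinv : ∀ x : S, lam x⁻¹ = (lam x)⁻¹)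
    (hsurj : Function.Surjective lam)
    (hker : ∀ x y : S, lam x = lam y ↔ (LenzArrow x y ∧ LenzArrow y x))
    (s t : S) :
    IsGLB ({lam s, lam t} : Set T) (lam (s ⊓ t)) :=
  quotient_meet_general lam hmul hinv hsurj hker s t
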